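/- Define, for λ > 0, t ∈ [0,1), y > 0, θ ∈ [0,t]: Φ^{1,λ}(t,y) := (1/(2√2·y)) e^{λ²/2} ∫_{(y−λ)²/(2(1−t))}^{(y+λ)²/(2(1−t))} e^{−u} u^{−1/2} du, Φ^{2,λ}(t,y) := ((y−λ)/(√((1−t)³)·y)) e^{λ²/2} exp(−(y−λ)²/(2(1−t))), and Φ^λ(t,y,θ) := Φ^{1,λ}(t,y) + (1−θ)·max(0, Φ^{2,λ}(t,y)). Then there is a positive function c₂ on [0,1), bounded on every interval [0, 1−ε] with ε ∈ (0,1), such that for all λ > 0, t ∈ [0,1), 0 ≤ θ ≤ t, and all y > 0 with y ≠ λ: |∂_y Φ^λ(t,y,θ)| ≤ c₂(t) · (1 + λ²) · (y + 1/y) · exp(λ²/2) · exp(−(y−λ)²/(2(1−t))), where ∂_y denotes the derivative in the second variable (which exists for y ≠ λ). -/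

import Mathlib

/-!
Write `s = 1 - t` and `a = (y - λ)² / (2s)`. Away from `y = λ` the sign of `Φ²` is locally
constant, so near `y` the function `Φ` is `Φ¹` (if `y < λ`) or `Φ¹ + (1 - θ) Φ²` (if `y > λ`).
By the fundamental theorem of calculus the `y`-derivative of the integral in `Φ¹` consists of two
boundary terms, each of modulus `√(2/s) e^{-u}` at its endpoint `u ≥ a`, while the integral itself
is at most `2 e^{-a} (√b - √a) ≤ 2√2 y e^{-a} / √s`; hence `|∂_y Φ¹| ≤ 2 e^{λ²/2} e^{-a} / (y √s)`.
Differentiating `Φ²` directly gives `|∂_y Φ²| ≤ e^{λ²/2} e^{-a} (1 / (y s^{3/2}) + y / s^{5/2})`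
for `y > λ`, and both bounds fit under `c₂(t) = 3 (1 - t)^{-5/2}`.
-/

open MeasureTheory Real

/-- `Φ^{1,λ}(t,y)`. -/
noncomputable def Phi1 (lam t y : ℝ) : ℝ :=
  1 / (2 * Real.sqrt 2 * y) * Real.exp (lam ^ 2 / 2) *
    ∫ u in (y - lam) ^ 2 / (2 * (1 - t))..(y + lam) ^ 2 / (2 * (1 - t)),
      Real.exp (-u) / Real.sqrt u

/-- `Φ^{2,λ}(t,y)`. -/
noncomputable def Phi2 (lam t y : ℝ) : ℝ :=
  (y - lam) / (Real.sqrt ((1 - t) ^ 3) * y) * Real.exp (lam ^ 2 / 2) *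
    Real.exp (-(y - lam) ^ 2 / (2 * (1 - t)))

/-- `Φ^λ(t,y,θ) = Φ^{1,λ}(t,y) + (1−θ)·max(0, Φ^{2,λ}(t,y))`. -/
noncomputable def Phi (lam t y θ : ℝ) : ℝ :=
  Phi1 lam t y + (1 - θ) * max 0 (Phi2 lam t y)

open Set Topology

theorem hasDerivAt_intervalIntegral_comp {E : Type*} [NormedAddCommGroup E] [NormedSpace ℝ E]
    [CompleteSpace E] {f : ℝ → E} {U : Set ℝ} (hU : IsOpen U) (hf : ContinuousOn f U)
    {g₁ g₂ : ℝ → ℝ} {g₁' g₂' y : ℝ} (h₁ : HasDerivAt g₁ g₁' y) (h₂ : HasDerivAt g₂ g₂' y)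
    (hsub : uIcc (g₁ y) (g₂ y) ⊆ U) :
    HasDerivAt (fun z => ∫ u in g₁ z..g₂ z, f u) (g₂' • f (g₂ y) - g₁' • f (g₁ y)) y := by
  have hmem₁ : g₁ y ∈ U := hsub left_mem_uIcc
  have hmem₂ : g₂ y ∈ U := hsub right_mem_uIcc
  have hF := intervalIntegral.integral_hasFDerivAt ((hf.mono hsub).intervalIntegrable)
    (hf.stronglyMeasurableAtFilter hU _ hmem₁) (hf.stronglyMeasurableAtFilter hU _ hmem₂)
    (hf.continuousAt (hU.mem_nhds hmem₁)) (hf.continuousAt (hU.mem_nhds hmem₂))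
  simpa [Function.comp_def] using hF.comp_hasDerivAt y (h₁.prodMk h₂)

theorem continuousOn_exp_neg_div_sqrt :
    ContinuousOn (fun u : ℝ => exp (-u) / √u) (Ioi 0) :=
  (continuous_exp.comp continuous_neg).continuousOn.div continuous_sqrt.continuousOn
    fun _ hu => (sqrt_pos.mpr hu).ne'

theorem integral_exp_neg_div_sqrt_le {a b : ℝ} (ha : 0 < a) (hab : a ≤ b) :
    ∫ u in a..b, exp (-u) / √u ≤ 2 * exp (-a) * (√b - √a) := by
  have hpos : ∀ u ∈ uIcc a b, 0 < u := fun u hu => ha.trans_le (uIcc_of_le hab ▸ hu).1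
  have hderiv : ∀ u ∈ uIcc a b, HasDerivAt (fun v => 2 * exp (-a) * √v) (exp (-a) / √u) u := by
    intro u hu
    have := (sqrt_pos.mpr (hpos u hu)).ne'
    exact ((hasDerivAt_sqrt (hpos u hu).ne').const_mul _).congr_deriv (by field_simp)
  have hcont : ContinuousOn (fun u => exp (-a) / √u) (uIcc a b) :=
    continuousOn_const.div continuous_sqrt.continuousOn fun u hu => (sqrt_pos.mpr (hpos u hu)).ne'
  calc ∫ u in a..b, exp (-u) / √u
      ≤ ∫ u in a..b, exp (-a) / √u := by
        refine intervalIntegral.integral_mono_on hab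
          ((continuousOn_exp_neg_div_sqrt.mono fun u hu => hpos u hu).intervalIntegrable)
          hcont.intervalIntegrable fun u hu => ?_
        gcongr
        exact hu.1
    _ = 2 * exp (-a) * (√b - √a) := by
        rw [intervalIntegral.integral_eq_sub_of_hasDerivAt hderiv hcont.intervalIntegrable]
        ring

theorem sqrt_sq_div_two_mul (v s : ℝ) :
    √(v ^ 2 / (2 * s)) = |v| / (√2 * √s) := by
  rw [sqrt_div (sq_nonneg v), sqrt_sq_eq_abs, sqrt_mul zero_le_two]

theorem abs_div_mul_exp_neg_div_sqrt {v s : ℝ} (hv : v ≠ 0) (hs : 0 < s) :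
    |v / s * (exp (-(v ^ 2 / (2 * s))) / √(v ^ 2 / (2 * s)))| =
      √2 * exp (-(v ^ 2 / (2 * s))) / √s := by
  have hs' : s = √s ^ 2 := (sq_sqrt hs.le).symm
  have : 0 < √s := sqrt_pos.mpr hs
  have : 0 < |v| := abs_pos.mpr hv
  rw [sqrt_sq_div_two_mul v s, abs_mul, abs_div, abs_div,
    abs_of_pos hs, abs_of_pos (exp_pos _), abs_of_pos (by positivity : 0 < |v| / (√2 * √s))]
  nth_rewrite 1 [hs']
  field_simp

theorem hasDerivAt_add_sq_div_two_mul {c y s : ℝ} (hs : 0 < s) :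
    HasDerivAt (fun z => (z + c) ^ 2 / (2 * s)) ((y + c) / s) y :=
  ((((hasDerivAt_id y).add_const c).pow 2).div_const (2 * s)).congr_deriv
    (by simp only [id]; field_simp; ring)

theorem exists_hasDerivAt_Phi1 {lam t y : ℝ} (hlam : 0 ≤ lam) (ht : t < 1) (hy : 0 < y)
    (hne : y ≠ lam) :
    ∃ D, HasDerivAt (Phi1 lam t) D y ∧
      |D| ≤ 2 * exp (lam ^ 2 / 2) * exp (-(y - lam) ^ 2 / (2 * (1 - t))) / (y * √(1 - t)) := by
  set s := 1 - t
  have hs : 0 < s := sub_pos.mpr ht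
  set a := (y - lam) ^ 2 / (2 * s)
  set b := (y + lam) ^ 2 / (2 * s)
  have ha : 0 < a := by have := sub_ne_zero.mpr hne; positivity
  have hab : a ≤ b := div_le_div_of_nonneg_right (by nlinarith) (by positivity)
  have hsub : uIcc a b ⊆ Ioi 0 := fun u hu => ha.trans_le (uIcc_of_le hab ▸ hu).1
  have hA : HasDerivAt (fun z => (z - lam) ^ 2 / (2 * s)) ((y - lam) / s) y := by
    simpa only [sub_eq_add_neg] using hasDerivAt_add_sq_div_two_mul (c := -lam) (y := y) hs
  have hI := hasDerivAt_intervalIntegral_comp isOpen_Ioi continuousOn_exp_neg_div_sqrt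
    hA (hasDerivAt_add_sq_div_two_mul hs) hsub
  set E := exp (lam ^ 2 / 2)
  have hIpos : 0 ≤ ∫ u in a..b, exp (-u) / √u :=
    intervalIntegral.integral_nonneg hab fun u _ => by positivity
  have hIle : ∫ u in a..b, exp (-u) / √u ≤ 4 * y * exp (-a) / (√2 * √s) := by
    calc ∫ u in a..b, exp (-u) / √u ≤ 2 * exp (-a) * (√b - √a) :=
          integral_exp_neg_div_sqrt_le ha hab
      _ = 2 * exp (-a) * ((y + lam) - |y - lam|) / (√2 * √s) := by
          rw [sqrt_sq_div_two_mul _ s, sqrt_sq_div_two_mul _ s, abs_of_pos (by linarith)]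
          ring
      _ ≤ 2 * exp (-a) * (2 * y) / (√2 * √s) := by
          gcongr
          linarith [neg_le_abs (y - lam)]
      _ = 4 * y * exp (-a) / (√2 * √s) := by ring
  have hI'le : |((y + lam) / s) • (exp (-b) / √b) - ((y - lam) / s) • (exp (-a) / √a)|
      ≤ 2 * √2 * exp (-a) / √s := by
    have heb : exp (-b) ≤ exp (-a) := exp_le_exp.mpr (neg_le_neg hab)
    calc _ ≤ |((y + lam) / s) • (exp (-b) / √b)| + |((y - lam) / s) • (exp (-a) / √a)| :=
          abs_sub _ _
      _ = √2 * exp (-b) / √s + √2 * exp (-a) / √s := by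
          rw [smul_eq_mul, smul_eq_mul, abs_div_mul_exp_neg_div_sqrt (by positivity) hs,
            abs_div_mul_exp_neg_div_sqrt (sub_ne_zero.mpr hne) hs]
      _ ≤ √2 * exp (-a) / √s + √2 * exp (-a) / √s := by gcongr
      _ = 2 * √2 * exp (-a) / √s := by ring
  have hpre : HasDerivAt (fun z => 1 / (2 * √2 * z) * E) (-(E / (2 * √2 * y ^ 2))) y :=
    (((hasDerivAt_const y 1).div ((hasDerivAt_id y).const_mul (2 * √2)) (by positivity)).mul_const
      E).congr_deriv (by simp only [id]; field_simp; ring)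
  refine ⟨_, hpre.mul hI, ?_⟩
  rw [neg_div]
  show |-(E / (2 * √2 * y ^ 2)) * (∫ u in a..b, exp (-u) / √u) + 1 / (2 * √2 * y) * E *
    (((y + lam) / s) • (exp (-b) / √b) - ((y - lam) / s) • (exp (-a) / √a))|
    ≤ 2 * E * exp (-a) / (y * √s)
  have : √2 ^ 2 = 2 := sq_sqrt zero_le_two
  calc _ ≤ E / (2 * √2 * y ^ 2) * (∫ u in a..b, exp (-u) / √u) + 1 / (2 * √2 * y) * E *
          |((y + lam) / s) • (exp (-b) / √b) - ((y - lam) / s) • (exp (-a) / √a)| := by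
        refine (abs_add_le _ _).trans_eq ?_
        rw [abs_mul, abs_mul, abs_neg, abs_of_pos (by positivity), abs_of_nonneg hIpos,
          abs_of_pos (by positivity)]
    _ ≤ E / (2 * √2 * y ^ 2) * (4 * y * exp (-a) / (√2 * √s)) + 1 / (2 * √2 * y) * E *
          (2 * √2 * exp (-a) / √s) := by gcongr
    _ = 2 * E * exp (-a) / (y * √s) := by
        field_simp
        rw [this]
        ring

theorem exists_hasDerivAt_Phi2 {lam t y : ℝ} (hlam : 0 ≤ lam) (ht : t < 1) (hy : lam ≤ y)
    (hy₀ : 0 < y) :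
    ∃ D, HasDerivAt (Phi2 lam t) D y ∧
      |D| ≤ exp (lam ^ 2 / 2) * exp (-(y - lam) ^ 2 / (2 * (1 - t))) *
        (1 / (y * √(1 - t) ^ 3) + y / √(1 - t) ^ 5) := by
  set s := 1 - t
  have hs : 0 < s := sub_pos.mpr ht
  set w := √s
  have hw : 0 < w := sqrt_pos.mpr hs
  have hws : s = w ^ 2 := (sq_sqrt hs.le).symm
  have hc : √(s ^ 3) = w ^ 3 := by rw [hws, ← pow_mul, mul_comm, pow_mul, sqrt_sq (by positivity)]
  set E := exp (lam ^ 2 / 2)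
  set g := exp (-(y - lam) ^ 2 / (2 * s))
  have hA : HasDerivAt (fun z => -(z - lam) ^ 2 / (2 * s)) (-((y - lam) / s)) y :=
    ((((hasDerivAt_id y).sub_const lam).pow 2).neg.div_const (2 * s)).congr_deriv
      (by simp only [id]; field_simp; ring)
  have hg : HasDerivAt (fun z => exp (-(z - lam) ^ 2 / (2 * s))) (g * -((y - lam) / s)) y :=
    hA.exp
  have hq : HasDerivAt (fun z => (z - lam) / (√(s ^ 3) * z)) (lam / (w ^ 3 * y ^ 2)) y :=
    (((hasDerivAt_id y).sub_const lam).div ((hasDerivAt_id y).const_mul _)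
      (by positivity)).congr_deriv (by simp only [id]; rw [hc]; field_simp; ring)
  refine ⟨_, (hq.mul_const E).mul hg, ?_⟩
  change |lam / (w ^ 3 * y ^ 2) * E * g + (y - lam) / (√(s ^ 3) * y) * E * (g * -((y - lam) / s))|
    ≤ E * g * (1 / (y * w ^ 3) + y / w ^ 5)
  have hsplit :
      lam / (w ^ 3 * y ^ 2) * E * g + (y - lam) / (√(s ^ 3) * y) * E * (g * -((y - lam) / s)) =
        E * g * (lam / (w ^ 3 * y ^ 2) - (y - lam) ^ 2 / (y * w ^ 5)) := by
    rw [hc, hws]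
    field_simp
    ring
  rw [hsplit, abs_mul, abs_of_pos (by positivity)]
  gcongr
  calc |lam / (w ^ 3 * y ^ 2) - (y - lam) ^ 2 / (y * w ^ 5)|
      ≤ lam / (w ^ 3 * y ^ 2) + (y - lam) ^ 2 / (y * w ^ 5) := by
        refine (abs_sub _ _).trans_eq ?_
        rw [abs_of_nonneg (by positivity), abs_of_nonneg (by positivity)]
    _ ≤ y / (w ^ 3 * y ^ 2) + y ^ 2 / (y * w ^ 5) := by
        gcongr
        linarith
    _ = 1 / (y * w ^ 3) + y / w ^ 5 := by
        field_simp

theorem Phi2_nonpos {lam t z : ℝ} (hz : 0 ≤ z) (hzl : z ≤ lam) : Phi2 lam t z ≤ 0 :=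
  mul_nonpos_of_nonpos_of_nonneg
    (mul_nonpos_of_nonpos_of_nonneg (div_nonpos_of_nonpos_of_nonneg (by linarith) (by positivity))
      (exp_pos _).le) (exp_pos _).le

theorem Phi2_nonneg {lam t z : ℝ} (hz : 0 ≤ z) (hzl : lam ≤ z) : 0 ≤ Phi2 lam t z :=
  mul_nonneg (mul_nonneg (div_nonneg (by linarith) (by positivity)) (exp_pos _).le) (exp_pos _).le

theorem Phi_eventuallyEq_Phi1 {lam t θ y : ℝ} (hy : 0 < y) (hlt : y < lam) :
    (fun z => Phi lam t z θ) =ᶠ[𝓝 y] Phi1 lam t := by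
  filter_upwards [Iio_mem_nhds hlt, Ioi_mem_nhds hy] with z hzl hz
  rw [Phi, max_eq_left (Phi2_nonpos (le_of_lt hz) (le_of_lt hzl)), mul_zero, add_zero]

theorem Phi_eventuallyEq_Phi1_add_Phi2 {lam t θ y : ℝ} (hlam : 0 ≤ lam) (hlt : lam < y) :
    (fun z => Phi lam t z θ) =ᶠ[𝓝 y] fun z => Phi1 lam t z + (1 - θ) * Phi2 lam t z := by
  filter_upwards [Ioi_mem_nhds hlt] with z hz
  rw [Phi, max_eq_right (Phi2_nonneg (hlam.trans (le_of_lt hz)) (le_of_lt hz))]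

theorem exists_hasDerivAt_Phi {lam t θ y : ℝ} (hlam : 0 ≤ lam) (ht : t ∈ Ico 0 1)
    (hθ : θ ∈ Icc 0 1) (hy : 0 < y) (hne : y ≠ lam) :
    ∃ D, HasDerivAt (fun z => Phi lam t z θ) D y ∧
      |D| ≤ 3 / √(1 - t) ^ 5 * (y + 1 / y) * exp (lam ^ 2 / 2) *
        exp (-(y - lam) ^ 2 / (2 * (1 - t))) := by
  set w := √(1 - t)
  have hw : 0 < w := sqrt_pos.mpr (sub_pos.mpr ht.2)
  have hw₁ : w ≤ 1 := sqrt_le_one.mpr (by linarith [ht.1])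
  set G := exp (lam ^ 2 / 2) * exp (-(y - lam) ^ 2 / (2 * (1 - t)))
  have harith : 2 / (y * w) + (1 / (y * w ^ 3) + y / w ^ 5) ≤ 3 / w ^ 5 * (y + 1 / y) := by
    have h2 : w ^ 2 ≤ 1 := pow_le_one₀ hw.le hw₁
    have h4 : w ^ 4 ≤ 1 := pow_le_one₀ hw.le hw₁
    field_simp
    linarith [sq_nonneg y]
  have hbound : G * (2 / (y * w) + (1 / (y * w ^ 3) + y / w ^ 5)) ≤
      3 / w ^ 5 * (y + 1 / y) * exp (lam ^ 2 / 2) * exp (-(y - lam) ^ 2 / (2 * (1 - t))) := by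
    calc _ ≤ G * (3 / w ^ 5 * (y + 1 / y)) := by gcongr
      _ = _ := by simp only [G]; ring
  obtain ⟨D₁, hD₁, hD₁le⟩ := exists_hasDerivAt_Phi1 hlam ht.2 hy hne
  have hD₁le' : |D₁| ≤ G * (2 / (y * w)) := hD₁le.trans_eq (by ring)
  rcases hne.lt_or_gt with hlt | hgt
  · refine ⟨D₁, hD₁.congr_of_eventuallyEq (Phi_eventuallyEq_Phi1 hy hlt), hD₁le'.trans ?_⟩
    refine le_trans ?_ hbound
    gcongr
    exact le_add_of_nonneg_right (by positivity)
  · obtain ⟨D₂, hD₂, hD₂le⟩ := exists_hasDerivAt_Phi2 hlam ht.2 hgt.le hy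
    refine ⟨_, (hD₁.add (hD₂.const_mul (1 - θ))).congr_of_eventuallyEq
      (Phi_eventuallyEq_Phi1_add_Phi2 hlam hgt), le_trans ?_ hbound⟩
    calc |D₁ + (1 - θ) * D₂| ≤ |D₁| + 1 * |D₂| := by
          refine (abs_add_le _ _).trans ?_
          rw [abs_mul, abs_of_nonneg (a := 1 - θ) (by linarith [hθ.2])]
          gcongr
          linarith [hθ.1]
      _ ≤ G * (2 / (y * w)) + G * (1 / (y * w ^ 3) + y / w ^ 5) := by
          rw [one_mul]
          exact add_le_add hD₁le' hD₂le
      _ = G * (2 / (y * w) + (1 / (y * w ^ 3) + y / w ^ 5)) := by ring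

/-- bound on the `y`-derivative of `Φ^λ` away from `y = λ`:
there is a positive function `c₂`, bounded on each `[0, 1−ε]`, such that for
`y > 0`, `y ≠ λ`, the derivative in `y` exists and
`|∂_y Φ^λ(t,y,θ)| ≤ c₂(t)(1+λ²)(y+1/y) e^{λ²/2} e^{−(y−λ)²/(2(1−t))}`. -/
theorem Phi_deriv_bound :
    ∃ c₂ : ℝ → ℝ,
      (∀ t ∈ Set.Ico (0 : ℝ) 1, 0 < c₂ t) ∧
      (∀ ε ∈ Set.Ioo (0 : ℝ) 1, ∃ M : ℝ, ∀ t ∈ Set.Icc (0 : ℝ) (1 - ε), c₂ t ≤ M) ∧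
      ∀ lam : ℝ, 0 < lam → ∀ t ∈ Set.Ico (0 : ℝ) 1, ∀ θ ∈ Set.Icc (0 : ℝ) t,
        ∀ y : ℝ, 0 < y → y ≠ lam →
          DifferentiableAt ℝ (fun z => Phi lam t z θ) y ∧
          |deriv (fun z => Phi lam t z θ) y| ≤
            c₂ t * (1 + lam ^ 2) * (y + 1 / y) * Real.exp (lam ^ 2 / 2) *
              Real.exp (-(y - lam) ^ 2 / (2 * (1 - t))) := by
  refine ⟨fun t => 3 / √(1 - t) ^ 5, fun t ht => ?_, fun ε hε => ⟨3 / √ε ^ 5, fun t ht => ?_⟩,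
    fun lam hlam t ht θ hθ y hy hne => ?_⟩
  · have := sqrt_pos.mpr (sub_pos.mpr ht.2)
    positivity
  · have := sqrt_pos.mpr hε.1
    dsimp only
    gcongr
    linarith [ht.2]
  · obtain ⟨D, hD, hDle⟩ := exists_hasDerivAt_Phi hlam.le ht ⟨hθ.1, hθ.2.trans ht.2.le⟩ hy hne
    refine ⟨hD.differentiableAt, hD.deriv ▸ hDle.trans ?_⟩
    have := sqrt_pos.mpr (sub_pos.mpr ht.2)
    dsimp only
    gcongr
    exact le_mul_of_one_le_right (by positivity) (le_add_of_nonneg_right (sq_nonneg lam))
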